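/- Let t ≥ 5 and suppose the edges of K_t are colored so that exactly one color class consists of three edges forming a triangle K_3, and every other color class is a single edge. Then the number of copies of P_5 in K_t containing at least two edges of the same color is exactly 9(t-3)(t-4). -/

import Mathlib

/-!
Two edges of a copy of P₅ share a colour iff both lie in the triangle, i.e. iff the path runs
through the triangle along three consecutive vertices. For labelled copies (embeddings
`Fin 5 ↪ Fin t`) the three consecutive positions can be chosen in 3 ways, the triangle placed on
them in 3! ways and the two remaining vertices in (t - 3)(t - 4) ways. Every unlabelled copy comes
from exactly |Aut P₅| = 2 labelled ones, so there are 18 (t - 3)(t - 4) / 2 copies.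
-/

open SimpleGraph Finset

theorem card_embedding_mapsTo {α β : Type*} [Fintype α] [Fintype β] [DecidableEq α]
    [DecidableEq β] (s : Finset α) (T : Finset β) (h : #s = #T) :
    Nat.card {f : α ↪ β // ∀ a ∈ s, f a ∈ T} =
      (#s).factorial * (Fintype.card β - #T).descFactorial (Fintype.card α - #s) := by
  have notMem {f : α ↪ β} (hf : ∀ a ∈ s, f a ∈ T) {a : α} (ha : a ∉ s) : f a ∉ T := by
    have hT : s.map f = T :=
      eq_of_subset_of_card_le (fun b hb => by obtain ⟨a, ha, rfl⟩ := mem_map.1 hb; exact hf a ha)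
        (by rw [card_map, h])
    rw [← hT, mem_map' f]
    exact ha
  let e : {f : α ↪ β // ∀ a ∈ s, f a ∈ T} ≃ (s ↪ T) × ({a // a ∉ s} ↪ {b // b ∉ T}) :=
    { toFun := fun f =>
        (f.1.subtypeMap fun a ha => f.2 a ha, f.1.subtypeMap fun a ha => notMem f.2 ha)
      invFun := fun gh => ⟨⟨fun a => if ha : a ∈ s then gh.1 ⟨a, ha⟩ else gh.2 ⟨a, ha⟩, by
          intro a b hab
          by_cases ha : a ∈ s <;> by_cases hb : b ∈ s <;>
            simp only [ha, hb, dite_true, dite_false] at hab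
          · exact congrArg Subtype.val (gh.1.injective (Subtype.ext hab))
          · exact absurd (hab ▸ (gh.1 ⟨a, ha⟩).2) (gh.2 ⟨b, hb⟩).2
          · exact absurd (hab ▸ (gh.1 ⟨b, hb⟩).2) (gh.2 ⟨a, ha⟩).2
          · exact congrArg Subtype.val (gh.2.injective (Subtype.ext hab))⟩,
        fun a ha => by convert (gh.1 ⟨a, ha⟩).2 using 1; exact dif_pos ha⟩
      left_inv := fun f => by ext a; by_cases ha : a ∈ s; exacts [dif_pos ha, dif_neg ha]
      right_inv := fun gh => by ext ⟨a, ha⟩; exacts [dif_pos ha, dif_neg ha] }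
  rw [Nat.card_congr e, Nat.card_prod, Nat.card_eq_fintype_card, Nat.card_eq_fintype_card,
    Fintype.card_embedding_eq, Fintype.card_embedding_eq, Fintype.card_coe, Fintype.card_coe,
    Fintype.card_subtype_compl, Fintype.card_subtype_compl, Fintype.card_coe, Fintype.card_coe, h,
    Nat.descFactorial_self]

lemma card_filter_embedding_mem_le {α β : Type*} [Fintype α] [DecidableEq β] (f : α ↪ β)
    (T : Finset β) : #{a | f a ∈ T} ≤ #T :=
  card_le_card_of_injOn f (fun _ ha => (mem_filter.1 ha).2) f.injective.injOn

namespace SimpleGraph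

lemma mem_edgeSet_pathGraph_iff {n : ℕ} {e : Sym2 (Fin (n + 1))} :
    e ∈ (pathGraph (n + 1)).edgeSet ↔ ∃ i : Fin n, s(i.castSucc, i.succ) = e := by
  induction e using Sym2.ind with
  | h a b =>
    simp only [mem_edgeSet, pathGraph_adj, Sym2.eq_iff, Fin.ext_iff, Fin.val_castSucc,
      Fin.val_succ]
    constructor
    · rintro (h | h)
      · exact ⟨⟨a, by omega⟩, Or.inl ⟨rfl, h⟩⟩
      · exact ⟨⟨b, by omega⟩, Or.inr ⟨rfl, h⟩⟩
    · rintro ⟨i, h | h⟩ <;> omega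

lemma card_aut_pathGraph_five : Nat.card (pathGraph 5 ≃g pathGraph 5) = 2 := by
  let e : (pathGraph 5 ≃g pathGraph 5) ≃ {σ : Equiv.Perm (Fin 5) // ∀ i j : Fin 5,
      ((σ i : ℕ) + 1 = σ j ∨ (σ j : ℕ) + 1 = σ i) ↔ ((i : ℕ) + 1 = j ∨ (j : ℕ) + 1 = i)} :=
    { toFun := fun φ =>
        ⟨φ.toEquiv, fun _ _ => pathGraph_adj.symm.trans (φ.map_adj_iff.trans pathGraph_adj)⟩
      invFun := fun σ => ⟨σ.1, pathGraph_adj.trans ((σ.2 _ _).trans pathGraph_adj.symm)⟩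
      left_inv := fun _ => rfl
      right_inv := fun _ => rfl }
  rw [Nat.card_congr e, Nat.card_eq_fintype_card]
  decide

namespace Copy

variable {α β : Type*} {A : SimpleGraph α} {B : SimpleGraph β}

lemma toSubgraph_adj_apply_iff (f : Copy A B) {a b : α} :
    f.toSubgraph.Adj (f a) (f b) ↔ A.Adj a b := by
  refine ⟨fun ⟨a', b', h, ha, hb⟩ => ?_, fun h => ⟨a, b, h, rfl, rfl⟩⟩
  rwa [← f.injective ha, ← f.injective hb]

lemma toSubgraph_comp_iso (f : Copy A B) (φ : A ≃g A) :
    (f.comp φ.toCopy).toSubgraph = f.toSubgraph := by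
  ext x y
  · simp only [Subgraph.map_verts, Subgraph.verts_top, Set.image_univ, Set.mem_range]
    exact ⟨fun ⟨a, h⟩ => ⟨φ a, h⟩, fun ⟨a, h⟩ => ⟨φ.symm a, by simpa using h⟩⟩
  · refine ⟨fun ⟨a, b, h, hx, hy⟩ => ⟨φ a, φ b, φ.map_adj_iff.2 h, hx, hy⟩,
      fun ⟨a, b, h, hx, hy⟩ => ⟨φ.symm a, φ.symm b, φ.symm.map_adj_iff.2 h, by simpa using hx,
        by simpa using hy⟩⟩

lemma exists_iso_of_toSubgraph_eq {f g : Copy A B} (h : f.toSubgraph = g.toSubgraph) :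
    ∃ φ : A ≃g A, g = f.comp φ.toCopy := by
  have hrange : Set.range g = Set.range f := by
    simpa using (congrArg Subgraph.verts h).symm
  let φ : α ≃ α := (Equiv.ofInjective g g.injective).trans
    ((Equiv.setCongr hrange).trans (Equiv.ofInjective f f.injective).symm)
  have hφ : ∀ a, f (φ a) = g a := fun a => by
    simp [φ, Equiv.apply_ofInjective_symm]
  refine ⟨⟨φ, fun {a b} => ?_⟩, ext fun a => (hφ a).symm⟩
  rw [← f.toSubgraph_adj_apply_iff, hφ, hφ, h, g.toSubgraph_adj_apply_iff]

theorem card_copy_eq_card_aut_mul [Finite α] [Finite β] (P : B.Subgraph → Prop) :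
    Nat.card {f : Copy A B // P f.toSubgraph} =
      Nat.card (A ≃g A) * Nat.card {H : B.Subgraph // Nonempty (A ≃g H.coe) ∧ P H} := by
  classical
  have := Fintype.ofFinite {H : B.Subgraph // Nonempty (A ≃g H.coe) ∧ P H}
  have : Finite (Copy A B) := Finite.of_injective _ DFunLike.coe_injective
  let F : {f : Copy A B // P f.toSubgraph} → {H : B.Subgraph // Nonempty (A ≃g H.coe) ∧ P H} :=
    fun f => ⟨f.1.toSubgraph, ⟨f.1.isoToSubgraph⟩, f.2⟩
  have hfiber : ∀ H, Nat.card {f // F f = H} = Nat.card (A ≃g A) := by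
    rintro ⟨H, hH, hP⟩
    obtain ⟨f₀, rfl⟩ : H ∈ Set.range (toSubgraph (A := A)) := by rwa [range_toSubgraph]
    refine (Nat.card_eq_of_bijective
      (fun φ => ⟨⟨f₀.comp φ.toCopy, by rwa [toSubgraph_comp_iso]⟩,
        by simp [F, toSubgraph_comp_iso]⟩)
      ⟨fun φ ψ hφψ => ?_, fun ⟨⟨g, hg⟩, hgH⟩ => ?_⟩).symm
    · ext a
      exact f₀.injective (DFunLike.congr_fun (congrArg (fun f => f.1.1) hφψ) a)
    · obtain ⟨φ, rfl⟩ := exists_iso_of_toSubgraph_eq (congrArg Subtype.val hgH).symm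
      exact ⟨φ, rfl⟩
  rw [← Nat.card_congr (Equiv.sigmaFiberEquiv F), Nat.card_sigma,
    sum_congr rfl fun H _ => hfiber H, sum_const, card_univ, ← Nat.card_eq_fintype_card,
    smul_eq_mul, mul_comm]

def topEquiv (A : SimpleGraph α) : Copy A (⊤ : SimpleGraph β) ≃ (α ↪ β) where
  toFun := Copy.toEmbedding
  invFun f := ⟨⟨f, fun h => f.injective.ne h.ne⟩, f.injective⟩

lemma mem_toSubgraph_edgeSet_pathGraph_iff {n : ℕ} {f : Copy (pathGraph (n + 1)) B}
    {e : Sym2 β} :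
    e ∈ f.toSubgraph.edgeSet ↔ ∃ i : Fin n, s(f i.castSucc, f i.succ) = e := by
  rw [Subgraph.edgeSet_map, Subgraph.edgeSet_top]
  constructor
  · rintro ⟨e', he', rfl⟩
    obtain ⟨i, rfl⟩ := mem_edgeSet_pathGraph_iff.1 he'
    exact ⟨i, rfl⟩
  · rintro ⟨i, rfl⟩
    exact ⟨_, mem_edgeSet_pathGraph_iff.2 ⟨i, rfl⟩, rfl⟩

end Copy

end SimpleGraph

lemma exists_ne_color_eq_iff {X C : Type*} {S K E : Set X} {c : X → C} {r : C}
    (hK : {e ∈ S | c e = r} = K) (hsingle : ∀ e ∈ S, ∀ f ∈ S, e ≠ f → c e = c f → c e = r)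
    (hE : E ⊆ S) :
    (∃ e ∈ E, ∃ f ∈ E, e ≠ f ∧ c e = c f) ↔ ∃ e ∈ E, ∃ f ∈ E, e ≠ f ∧ e ∈ K ∧ f ∈ K := by
  subst hK
  constructor
  · rintro ⟨e, he, f, hf, hef, hc⟩
    have hce := hsingle e (hE he) f (hE hf) hef hc
    exact ⟨e, he, f, hf, hef, ⟨hE he, hce⟩, hE hf, hc ▸ hce⟩
  · rintro ⟨e, he, f, hf, hef, ⟨-, hce⟩, -, hcf⟩
    exact ⟨e, he, f, hf, hef, hce.trans hcf.symm⟩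

def window (k : Fin 3) : Finset (Fin 5) := {i | (k : ℕ) ≤ i ∧ (i : ℕ) ≤ k + 2}

lemma card_window (k : Fin 3) : #(window k) = 3 := by revert k; decide

lemma exists_two_edges_iff_exists_window {Q : Finset (Fin 5)} (hQ : #Q ≤ 3) :
    (∃ i j : Fin 4, i ≠ j ∧ i.castSucc ∈ Q ∧ i.succ ∈ Q ∧ j.castSucc ∈ Q ∧ j.succ ∈ Q) ↔
      ∃ k, window k ⊆ Q := by
  revert Q; decide

lemma window_unique {Q : Finset (Fin 5)} (hQ : #Q ≤ 3) {k k' : Fin 3} (hk : window k ⊆ Q)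
    (hk' : window k' ⊆ Q) : k = k' := by
  revert Q k k'; decide

section Triangle

variable {V : Type*} [DecidableEq V] {u v w : V}

lemma mk_mem_triangle_iff {a b : V} (huv : u ≠ v) (huw : u ≠ w) (hvw : v ≠ w) :
    s(a, b) ∈ ({s(u, v), s(v, w), s(u, w)} : Set (Sym2 V)) ↔
      a ≠ b ∧ a ∈ ({u, v, w} : Finset V) ∧ b ∈ ({u, v, w} : Finset V) := by
  simp only [Set.mem_insert_iff, Set.mem_singleton_iff, Sym2.eq_iff, mem_insert, mem_singleton]
  grind

lemma SimpleGraph.Copy.exists_two_triangle_edges_iff (huv : u ≠ v) (huw : u ≠ w) (hvw : v ≠ w)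
    (f : Copy (pathGraph 5) (⊤ : SimpleGraph V)) :
    (∃ e ∈ f.toSubgraph.edgeSet, ∃ e' ∈ f.toSubgraph.edgeSet, e ≠ e' ∧
        e ∈ ({s(u, v), s(v, w), s(u, w)} : Set (Sym2 V)) ∧
        e' ∈ ({s(u, v), s(v, w), s(u, w)} : Set (Sym2 V))) ↔
      ∃ k, ∀ i ∈ window k, f i ∈ ({u, v, w} : Finset V) := by
  set T : Finset V := {u, v, w}
  set Q : Finset (Fin 5) := {i | f i ∈ T}
  have hQ : #Q ≤ 3 := (card_filter_embedding_mem_le f.toEmbedding T).trans card_le_three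
  have hmemQ : ∀ i, i ∈ Q ↔ f i ∈ T := fun i => mem_filter_univ _
  rw [show (∃ k, ∀ i ∈ window k, f i ∈ T) ↔ ∃ k, window k ⊆ Q by simp only [subset_iff, hmemQ],
    ← exists_two_edges_iff_exists_window hQ]
  simp only [hmemQ, mem_toSubgraph_edgeSet_pathGraph_iff]
  constructor
  · rintro ⟨_, ⟨i, rfl⟩, _, ⟨j, rfl⟩, hne, hi, hj⟩
    rw [mk_mem_triangle_iff huv huw hvw] at hi hj
    exact ⟨i, j, fun h => hne (h ▸ rfl), hi.2.1, hi.2.2, hj.2.1, hj.2.2⟩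
  · rintro ⟨i, j, hij, hi, hi', hj, hj'⟩
    have hedge (k : Fin 4) : f k.castSucc ≠ f k.succ := f.injective.ne Fin.castSucc_lt_succ.ne
    refine ⟨_, ⟨i, rfl⟩, _, ⟨j, rfl⟩, fun h => hij ?_, (mk_mem_triangle_iff huv huw hvw).2
      ⟨hedge i, hi, hi'⟩, (mk_mem_triangle_iff huv huw hvw).2 ⟨hedge j, hj, hj'⟩⟩
    have hsym : s(i.castSucc, i.succ) = s(j.castSucc, j.succ) := Sym2.map.injective f.injective h
    simp only [Sym2.eq_iff, Fin.ext_iff, Fin.val_castSucc, Fin.val_succ] at hsym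
    omega

end Triangle

lemma card_embedding_exists_window {V : Type*} [Fintype V] [DecidableEq V] {T : Finset V}
    (hT : #T = 3) :
    Nat.card {f : Fin 5 ↪ V // ∃ k, ∀ i ∈ window k, f i ∈ T} =
      3 * (Nat.factorial 3 * (Fintype.card V - 3).descFactorial 2) := by
  have hdisj : ((univ : Finset (Fin 3)) : Set (Fin 3)).PairwiseDisjoint
      fun k => ({f : Fin 5 ↪ V | ∀ i ∈ window k, f i ∈ T} : Finset _) := by
    intro k _ k' _ hne
    refine disjoint_filter.2 fun f _ hk hk' => hne <|
      window_unique ((card_filter_embedding_mem_le f T).trans hT.le) ?_ ?_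
    · exact fun i hi => (mem_filter_univ _).2 (hk i hi)
    · exact fun i hi => (mem_filter_univ _).2 (hk' i hi)
  have hunion : ({f : Fin 5 ↪ V | ∃ k, ∀ i ∈ window k, f i ∈ T} : Finset _) =
      univ.biUnion fun k => {f | ∀ i ∈ window k, f i ∈ T} := by
    ext f
    simp only [mem_filter_univ, mem_biUnion, mem_univ, true_and]
  rw [Nat.card_eq_fintype_card, Fintype.card_subtype, hunion, card_biUnion hdisj]
  have hcard (k : Fin 3) : #{f : Fin 5 ↪ V | ∀ i ∈ window k, f i ∈ T} =
      Nat.factorial 3 * (Fintype.card V - 3).descFactorial 2 := by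
    rw [← Fintype.card_subtype, ← Nat.card_eq_fintype_card,
      card_embedding_mapsTo _ _ ((card_window k).trans hT.symm), card_window, hT, Fintype.card_fin]
  simp only [hcard, sum_const, card_univ, Fintype.card_fin, smul_eq_mul]

theorem stmt_17_general (t : ℕ) (c : Sym2 (Fin t) → ℕ) (r : ℕ)
    (u v w : Fin t) (huv : u ≠ v) (huw : u ≠ w) (hvw : v ≠ w)
    (htriangle : {e ∈ (⊤ : SimpleGraph (Fin t)).edgeSet | c e = r} =
      ({s(u, v), s(v, w), s(u, w)} : Set (Sym2 (Fin t))))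
    (hsingle : ∀ e ∈ (⊤ : SimpleGraph (Fin t)).edgeSet,
      ∀ f ∈ (⊤ : SimpleGraph (Fin t)).edgeSet, e ≠ f → c e = c f → c e = r) :
    Nat.card {H : (⊤ : SimpleGraph (Fin t)).Subgraph //
      Nonempty (H.coe ≃g pathGraph 5) ∧
      ∃ e ∈ H.edgeSet, ∃ f ∈ H.edgeSet, e ≠ f ∧ c e = c f} = 9 * (t - 3) * (t - 4) := by
  classical
  set T : Finset (Fin t) := {u, v, w}
  have hP (f : Copy (pathGraph 5) (⊤ : SimpleGraph (Fin t))) :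
      (∃ e ∈ f.toSubgraph.edgeSet, ∃ e' ∈ f.toSubgraph.edgeSet, e ≠ e' ∧ c e = c e') ↔
        ∃ k, ∀ i ∈ window k, f i ∈ T :=
    (exists_ne_color_eq_iff htriangle hsingle f.toSubgraph.edgeSet_subset).trans
      (f.exists_two_triangle_edges_iff huv huw hvw)
  have hiso (H : (⊤ : SimpleGraph (Fin t)).Subgraph) :
      Nonempty (pathGraph 5 ≃g H.coe) ↔ Nonempty (H.coe ≃g pathGraph 5) :=
    ⟨fun ⟨e⟩ => ⟨e.symm⟩, fun ⟨e⟩ => ⟨e.symm⟩⟩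
  have hcount := Copy.card_copy_eq_card_aut_mul (A := pathGraph 5) (B := ⊤)
    fun H => ∃ e ∈ H.edgeSet, ∃ f ∈ H.edgeSet, e ≠ f ∧ c e = c f
  rw [card_aut_pathGraph_five, Nat.card_congr <| (Copy.topEquiv _).subtypeEquiv
      (q := fun g => ∃ k, ∀ i ∈ window k, g i ∈ T) hP,
    card_embedding_exists_window (card_eq_three.2 ⟨u, v, w, huv, huw, hvw, rfl⟩),
    Fintype.card_fin] at hcount
  simp_rw [hiso] at hcount
  have hdesc : (t - 3).descFactorial 2 = (t - 3) * (t - 4) := by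
    simp only [Nat.descFactorial, Nat.sub_zero, mul_one]
    rw [mul_comm, Nat.sub_sub]
  rw [hdesc, show Nat.factorial 3 = 6 from rfl] at hcount
  linarith

theorem stmt_17 (t : ℕ) (ht : 5 ≤ t) (c : Sym2 (Fin t) → ℕ) (r : ℕ)
    (u v w : Fin t) (huv : u ≠ v) (huw : u ≠ w) (hvw : v ≠ w)
    (htriangle : {e ∈ (⊤ : SimpleGraph (Fin t)).edgeSet | c e = r} =
      ({s(u, v), s(v, w), s(u, w)} : Set (Sym2 (Fin t))))
    (hsingle : ∀ e ∈ (⊤ : SimpleGraph (Fin t)).edgeSet,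
      ∀ f ∈ (⊤ : SimpleGraph (Fin t)).edgeSet, e ≠ f → c e = c f → c e = r) :
    Nat.card {H : (⊤ : SimpleGraph (Fin t)).Subgraph //
      Nonempty (H.coe ≃g pathGraph 5) ∧
      ∃ e ∈ H.edgeSet, ∃ f ∈ H.edgeSet, e ≠ f ∧ c e = c f} = 9 * (t - 3) * (t - 4) :=
  stmt_17_general t c r u v w huv huw hvw htriangle hsingle
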